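/- arXiv:2203.00949 — 3 statements merged into one kernel-verified Lean document; each statement's English description precedes it below -/
import Mathlib

section
/- Let N and d be positive integers, let X be an N×d real matrix that is row-normalized (every row has Euclidean norm 1), and let A and A' be two N×N matrices with entries in {0,1} that are edge-level adjacent: there exist indices v and u such that A_{v,u} = 1, A'_{v,u} = 0, and A_{i,j} = A'_{i,j} for all (i,j) ≠ (v,u). Then the Frobenius norm of Aᵀ·X − A'ᵀ·X equals 1. -/
open scoped BigOperators
open Matrix

/-- **Edge-level sensitivity of sum aggregation.**
If `X` is an `N × d` row-normalized real matrix (each row has Euclidean norm `1`) and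
`A`, `A'` are binary `N × N` adjacency matrices that are edge-level adjacent (they agree
everywhere except at a single entry `(v, u)` where `A v u = 1` and `A' v u = 0`), then the
Frobenius norm of `Aᵀ ⬝ X - A'ᵀ ⬝ X` equals `1`. -/
theorem edge_level_sensitivity_sum_aggregation
    (N d : ℕ) (hN : 0 < N) (hd : 0 < d)
    (X : Matrix (Fin N) (Fin d) ℝ)
    (hX : ∀ i, Real.sqrt (∑ j, (X i j) ^ 2) = 1)
    (A A' : Matrix (Fin N) (Fin N) ℝ)
    (hA : ∀ i j, A i j = 0 ∨ A i j = 1)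
    (hA' : ∀ i j, A' i j = 0 ∨ A' i j = 1)
    (v u : Fin N)
    (h1 : A v u = 1) (h0 : A' v u = 0)
    (hrest : ∀ i j, (i, j) ≠ (v, u) → A i j = A' i j) :
    Real.sqrt (∑ i, ∑ j, ((Aᵀ * X - A'ᵀ * X) i j) ^ 2) = 1 := by
  have key : ∀ i j, (Aᵀ * X - A'ᵀ * X) i j = if i = u then X v j else 0 := by
    intro i j
    simp only [Matrix.sub_apply, Matrix.mul_apply, Matrix.transpose_apply,
      ← Finset.sum_sub_distrib]
    have : ∀ k, A k i * X k j - A' k i * X k j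
        = if k = v ∧ i = u then X v j else 0 := by
      intro k
      by_cases hk : k = v ∧ i = u
      · obtain ⟨rfl, rfl⟩ := hk
        simp [h1, h0]
      · have : A k i = A' k i := by
          apply hrest
          intro h
          exact hk ⟨congrArg Prod.fst h, congrArg Prod.snd h⟩
        simp [this, hk]
    rw [Finset.sum_congr rfl fun k _ => this k]
    by_cases hi : i = u <;> simp [hi]
  have : (∑ i, ∑ j, ((Aᵀ * X - A'ᵀ * X) i j) ^ 2) = ∑ j, (X v j) ^ 2 := by
    rw [Finset.sum_congr rfl fun i _ => Finset.sum_congr rfl fun j _ => by rw [key i j]]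
    simp [Finset.sum_ite_eq', apply_ite (· ^ 2)]
  rw [this, hX v]
end

section
/- Let d be a positive integer, α > 1, σ > 0, and let μ, μ' ∈ ℝ^d. Then the Rényi divergence of order α between the product measure ⊗_{i=1}^d N(μ_i, σ²) (d independent Gaussian coordinates with means μ_i and common variance σ²) and the product measure ⊗_{i=1}^d N(μ'_i, σ²) equals α·‖μ − μ'‖²/(2σ²), where ‖·‖ is the Euclidean norm on ℝ^d. -/
/-!
Under `N(m', v)` the likelihood ratio of `N(m, v)` is `x ↦ exp (((x - m')² - (x - m)²) / (2v))`,
the exponential of an affine function of `x`, so its `α`-th moment is a value of the Gaussian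
moment generating function, `exp (α (α - 1) (m - m')² / (2v))`. For product measures the
Radon–Nikodym derivative is the product of the coordinatewise derivatives, so by Fubini
`∫ (dP/dQ)^α dQ` factorises and the Rényi divergence is additive over coordinates.
-/

open MeasureTheory ProbabilityTheory
open scoped BigOperators

/-- The Rényi divergence of order `α` between measures `P` and `Q`:
`D_α(P‖Q) = (1/(α−1)) · log ∫ (dP/dQ)^α dQ`. -/
noncomputable def renyiDiv {Ω : Type*} [MeasurableSpace Ω] (α : ℝ)
    (P Q : Measure Ω) : ℝ :=
  (α - 1)⁻¹ * Real.log (∫ x, (P.rnDeriv Q x).toReal ^ α ∂Q)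

open scoped ENNReal NNReal

theorem MeasureTheory.lintegral_fin_nat_prod_eq_prod {n : ℕ} {E : Fin n → Type*}
    {mE : ∀ i, MeasurableSpace (E i)} {μ : (i : Fin n) → Measure (E i)} [∀ i, SigmaFinite (μ i)]
    {f : (i : Fin n) → E i → ℝ≥0∞} (hf : ∀ i, Measurable (f i)) :
    ∫⁻ x, ∏ i, f i (x i) ∂Measure.pi μ = ∏ i, ∫⁻ x, f i x ∂μ i := by
  induction n with
  | zero => simp
  | succ n ih =>
    have hg : Measurable fun y : (j : Fin n) → E ((0 : Fin (n + 1)).succAbove j) ↦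
        ∏ j, f _ (y j) :=
      Finset.measurable_prod _ fun j _ ↦ (hf _).comp (measurable_pi_apply j)
    calc _ = ∫⁻ x, f 0 (x 0) * ∏ j : Fin n, f _ (x ((0 : Fin (n + 1)).succAbove j))
            ∂Measure.pi μ := by
          simp_rw [Fin.prod_univ_succAbove _ 0]
      _ = ∫⁻ p, f 0 p.1 * ∏ j, f _ (p.2 j)
            ∂(μ 0).prod (Measure.pi fun j ↦ μ ((0 : Fin (n + 1)).succAbove j)) := by
          rw [← (measurePreserving_piFinSuccAbove μ 0).lintegral_comp_emb
            (MeasurableEquiv.measurableEmbedding _)]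
          rfl
      _ = _ := by
          rw [lintegral_prod_mul (hf 0).aemeasurable hg.aemeasurable, ih fun j ↦ hf _,
            Fin.prod_univ_succAbove _ 0]

section Pi

variable {ι : Type*} [Fintype ι] {E : ι → Type*} {mE : ∀ i, MeasurableSpace (E i)}

theorem MeasureTheory.lintegral_fintype_prod_eq_prod {μ : (i : ι) → Measure (E i)}
    [∀ i, SigmaFinite (μ i)] {f : (i : ι) → E i → ℝ≥0∞} (hf : ∀ i, Measurable (f i)) :
    ∫⁻ x, ∏ i, f i (x i) ∂Measure.pi μ = ∏ i, ∫⁻ x, f i x ∂μ i := by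
  let e := (Fintype.equivFin ι).symm
  rw [← (measurePreserving_piCongrLeft _ e).lintegral_comp_emb
    (MeasurableEquiv.measurableEmbedding _)]
  simp_rw [← e.prod_comp, MeasurableEquiv.coe_piCongrLeft, Equiv.piCongrLeft_apply_apply]
  exact lintegral_fin_nat_prod_eq_prod fun i ↦ hf _

theorem MeasureTheory.Measure.pi_withDensity {μ : (i : ι) → Measure (E i)}
    [∀ i, SigmaFinite (μ i)] {f : (i : ι) → E i → ℝ≥0∞} (hf : ∀ i, Measurable (f i))
    [∀ i, SigmaFinite ((μ i).withDensity (f i))] :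
    Measure.pi (fun i ↦ (μ i).withDensity (f i)) =
      (Measure.pi μ).withDensity fun x ↦ ∏ i, f i (x i) := by
  refine Measure.pi_eq fun s hs ↦ ?_
  rw [withDensity_apply _ (.univ_pi hs), Measure.restrict_pi_pi,
    lintegral_fintype_prod_eq_prod hf]
  exact Finset.prod_congr rfl fun i _ ↦ (withDensity_apply _ (hs i)).symm

theorem MeasureTheory.Measure.rnDeriv_pi {μ ν : (i : ι) → Measure (E i)}
    [∀ i, SigmaFinite (μ i)] [∀ i, SigmaFinite (ν i)] (hμν : ∀ i, μ i ≪ ν i) :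
    (Measure.pi μ).rnDeriv (Measure.pi ν) =ᵐ[Measure.pi ν]
      fun x ↦ ∏ i, (μ i).rnDeriv (ν i) (x i) := by
  have hμ : Measure.pi μ =
      (Measure.pi ν).withDensity fun x ↦ ∏ i, (μ i).rnDeriv (ν i) (x i) := by
    rw [← Measure.pi_withDensity fun i ↦ Measure.measurable_rnDeriv _ _]
    simp_rw [Measure.withDensity_rnDeriv_eq _ _ (hμν _)]
  rw [hμ]
  exact Measure.rnDeriv_withDensity _ <| Finset.measurable_prod _ fun i _ ↦
    (Measure.measurable_rnDeriv _ _).comp (measurable_pi_apply i)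

theorem MeasureTheory.integral_rnDeriv_rpow_pi {μ ν : (i : ι) → Measure (E i)}
    [∀ i, SigmaFinite (μ i)] [∀ i, SigmaFinite (ν i)] (hμν : ∀ i, μ i ≪ ν i) (α : ℝ) :
    ∫ x, ((Measure.pi μ).rnDeriv (Measure.pi ν) x).toReal ^ α ∂Measure.pi ν =
      ∏ i, ∫ x, ((μ i).rnDeriv (ν i) x).toReal ^ α ∂ν i := by
  rw [← integral_fintype_prod_eq_prod]
  refine integral_congr_ae ?_
  filter_upwards [Measure.rnDeriv_pi hμν] with x hx
  rw [hx, ENNReal.toReal_prod, Real.finsetProd_rpow _ _ fun i _ ↦ ENNReal.toReal_nonneg]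

theorem renyiDiv_pi {μ ν : (i : ι) → Measure (E i)} [∀ i, SigmaFinite (μ i)]
    [∀ i, SigmaFinite (ν i)] (hμν : ∀ i, μ i ≪ ν i) {α : ℝ}
    (hne : ∀ i, ∫ x, ((μ i).rnDeriv (ν i) x).toReal ^ α ∂ν i ≠ 0) :
    renyiDiv α (Measure.pi μ) (Measure.pi ν) = ∑ i, renyiDiv α (μ i) (ν i) := by
  simp only [renyiDiv, integral_rnDeriv_rpow_pi hμν, Real.log_prod fun i _ ↦ hne i,
    Finset.mul_sum]

end Pi

namespace ProbabilityTheory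

variable {v : ℝ≥0}

lemma gaussianReal_eq_withDensity_gaussianReal (m m' : ℝ) (hv : v ≠ 0) :
    gaussianReal m v = (gaussianReal m' v).withDensity
      fun x ↦ ENNReal.ofReal (Real.exp (((x - m') ^ 2 - (x - m) ^ 2) / (2 * v))) := by
  rw [gaussianReal_of_var_ne_zero _ hv, gaussianReal_of_var_ne_zero _ hv,
    ← withDensity_mul _ (measurable_gaussianPDF _ _) (by fun_prop)]
  congr 1
  ext x
  rw [Pi.mul_apply, gaussianPDF, gaussianPDF,
    ← ENNReal.ofReal_mul (gaussianPDFReal_nonneg _ _ _), gaussianPDFReal, gaussianPDFReal,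
    mul_assoc _ (Real.exp _), ← Real.exp_add]
  congr 3
  field_simp
  ring

lemma rnDeriv_gaussianReal_gaussianReal (m m' : ℝ) (hv : v ≠ 0) :
    (gaussianReal m v).rnDeriv (gaussianReal m' v) =ᵐ[gaussianReal m' v]
      fun x ↦ ENNReal.ofReal (Real.exp (((x - m') ^ 2 - (x - m) ^ 2) / (2 * v))) := by
  rw [gaussianReal_eq_withDensity_gaussianReal m m' hv]
  exact Measure.rnDeriv_withDensity _ (by fun_prop)

lemma integral_rnDeriv_rpow_gaussianReal (m m' α : ℝ) (hv : v ≠ 0) :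
    ∫ x, ((gaussianReal m v).rnDeriv (gaussianReal m' v) x).toReal ^ α ∂gaussianReal m' v =
      Real.exp (α * (α - 1) * (m - m') ^ 2 / (2 * v)) := by
  have hmgf := congrFun (mgf_id_gaussianReal (μ := m') (v := v)) (α * (m - m') / v)
  simp only [mgf, id] at hmgf
  calc _ = ∫ x, Real.exp (α * (m' ^ 2 - m ^ 2) / (2 * v)) * Real.exp (α * (m - m') / v * x)
          ∂gaussianReal m' v := by
        refine integral_congr_ae ?_
        filter_upwards [rnDeriv_gaussianReal_gaussianReal m m' hv] with x hx
        rw [hx, ENNReal.toReal_ofReal (Real.exp_nonneg _), ← Real.exp_mul, ← Real.exp_add]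
        congr 1
        field_simp
        ring
    _ = _ := by
        rw [integral_const_mul, hmgf, ← Real.exp_add]
        congr 1
        field_simp
        ring

lemma renyiDiv_gaussianReal {α : ℝ} (hα : α ≠ 1) (m m' : ℝ) (hv : v ≠ 0) :
    renyiDiv α (gaussianReal m v) (gaussianReal m' v) = α * (m - m') ^ 2 / (2 * v) := by
  rw [renyiDiv, integral_rnDeriv_rpow_gaussianReal m m' α hv, Real.log_exp]
  field_simp [sub_ne_zero.2 hα]

end ProbabilityTheory

theorem renyiDiv_gaussian_pi_general (d : ℕ) (α σ : ℝ) (hα : 1 < α) (hσ : 0 < σ)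
    (μ μ' : Fin d → ℝ) :
    renyiDiv α
        (Measure.pi fun i => gaussianReal (μ i) ((σ ^ 2).toNNReal))
        (Measure.pi fun i => gaussianReal (μ' i) ((σ ^ 2).toNNReal)) =
      α * (∑ i, (μ i - μ' i) ^ 2) / (2 * σ ^ 2) := by
  have hv : (σ ^ 2).toNNReal ≠ 0 := by positivity
  have hσ2 : ((σ ^ 2).toNNReal : ℝ) = σ ^ 2 := Real.coe_toNNReal _ (sq_nonneg σ)
  rw [renyiDiv_pi (fun i ↦ (gaussianReal_absolutelyContinuous _ hv).trans
      (gaussianReal_absolutelyContinuous' _ hv))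
    fun i ↦ by rw [integral_rnDeriv_rpow_gaussianReal _ _ _ hv]; exact (Real.exp_pos _).ne']
  simp only [renyiDiv_gaussianReal hα.ne' _ _ hv, hσ2, Finset.mul_sum, Finset.sum_div]

/-- **Rényi divergence between isotropic multivariate Gaussians of equal variance.**
For `d ≥ 1`, `α > 1`, `σ > 0` and `μ, μ' ∈ ℝ^d`, the Rényi divergence of order `α` between
the product measure `⊗_{i} N(μ_i, σ²)` and `⊗_{i} N(μ'_i, σ²)` equals
`α·‖μ − μ'‖²/(2σ²)`, where `‖μ − μ'‖² = ∑ i, (μ i − μ' i)²` is the squared Euclidean norm. -/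
theorem renyiDiv_gaussian_pi (d : ℕ) (hd : 0 < d) (α σ : ℝ) (hα : 1 < α) (hσ : 0 < σ)
    (μ μ' : Fin d → ℝ) :
    renyiDiv α
        (Measure.pi fun i => gaussianReal (μ i) ((σ ^ 2).toNNReal))
        (Measure.pi fun i => gaussianReal (μ' i) ((σ ^ 2).toNNReal)) =
      α * (∑ i, (μ i - μ' i) ^ 2) / (2 * σ ^ 2) :=
  renyiDiv_gaussian_pi_general d α σ hα hσ μ μ'
end

section
/- Let N, d, K be positive integers, σ > 0, and let X^{(0)}, X^{(1)}, …, X^{(K−1)} be N×d real matrices whose rows all have Euclidean norm 1. Let A and A' be N×N matrices with entries in {0,1} that are edge-level adjacent (they differ in exactly one entry, where A has a 1 and A' has a 0). Let P be the law on (ℝ^{N×d})^K of the tuple (Aᵀ·X^{(0)} + Z_1, …, Aᵀ·X^{(K−1)} + Z_K) and P' the law of (A'ᵀ·X^{(0)} + Z_1, …, A'ᵀ·X^{(K−1)} + Z_K), where Z_1, …, Z_K are independent N×d matrices of independent N(0, σ²) entries. Then for every α > 1, the Rényi divergence of order α between P and P' is at most K·α/(2σ²). -/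
open MeasureTheory ProbabilityTheory
open scoped BigOperators

/-!
The laws of both releases are products of one-dimensional Gaussians of variance `σ²`, with means
`m = Aᵀ X` and `m' = A'ᵀ X`. The Hellinger integral `∫ (dP/dQ)^α dQ` is multiplicative over
products of measures, and for two Gaussians of equal variance `v` it is
`exp (α (α - 1) (m - m')² / (2 v))`, so `D_α(P‖P') = α ‖m - m'‖² / (2σ²)`. Deleting the edge
`(v, u)` changes only row `u` of each aggregate, by the unit row `v` of `X`; hence
`‖m - m'‖² = K` and the bound holds with equality.
-/

open scoped ENNReal NNReal

namespace MeasureTheory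

variable {ι : Type*} [Fintype ι] {E : ι → Type*} [∀ i, MeasurableSpace (E i)]

theorem lintegral_fintype_prod_eq_prod_s9 (μ : ∀ i, Measure (E i))
    [∀ i, IsProbabilityMeasure (μ i)] {f : ∀ i, E i → ℝ≥0∞} (hf : ∀ i, Measurable (f i)) :
    ∫⁻ x, ∏ i, f i (x i) ∂Measure.pi μ = ∏ i, ∫⁻ x, f i x ∂μ i := by
  rw [lintegral_prod_eq_prod_lintegral_of_indepFun _ _
    (iIndepFun_pi fun i => (hf i).aemeasurable) fun i => (hf i).comp (measurable_pi_apply i)]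
  exact Finset.prod_congr rfl fun i _ => (measurePreserving_eval μ i).lintegral_comp (hf i)

variable (P Q : ∀ i, Measure (E i)) [∀ i, SigmaFinite (P i)] [∀ i, IsProbabilityMeasure (Q i)]

theorem Measure.pi_eq_withDensity_prod_rnDeriv (hPQ : ∀ i, P i ≪ Q i) :
    Measure.pi P = (Measure.pi Q).withDensity fun x => ∏ i, (P i).rnDeriv (Q i) (x i) := by
  refine Measure.pi_eq fun s hs => ?_
  have hind : (Set.univ.pi s).indicator (fun x => ∏ i, (P i).rnDeriv (Q i) (x i))
      = fun x => ∏ i, (s i).indicator ((P i).rnDeriv (Q i)) (x i) := by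
    ext x
    classical simp [Set.indicator, Finset.prod_ite_zero]
  rw [withDensity_apply _ (.univ_pi hs), ← lintegral_indicator (.univ_pi hs), hind,
    lintegral_fintype_prod_eq_prod_s9 Q fun i => (Measure.measurable_rnDeriv _ _).indicator (hs i)]
  exact Finset.prod_congr rfl fun i _ => by
    rw [lintegral_indicator (hs i), Measure.setLIntegral_rnDeriv (hPQ i)]

theorem Measure.AbsolutelyContinuous.pi (hPQ : ∀ i, P i ≪ Q i) :
    Measure.pi P ≪ Measure.pi Q := by
  rw [Measure.pi_eq_withDensity_prod_rnDeriv P Q hPQ]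
  exact withDensity_absolutelyContinuous _ _

end MeasureTheory

noncomputable def hellingerIntegral {Ω : Type*} [MeasurableSpace Ω] (α : ℝ)
    (P Q : Measure Ω) : ℝ :=
  ∫ x, (P.rnDeriv Q x).toReal ^ α ∂Q

theorem renyiDiv_eq_inv_mul_log_hellingerIntegral {Ω : Type*} [MeasurableSpace Ω] (α : ℝ)
    (P Q : Measure Ω) :
    renyiDiv α P Q = (α - 1)⁻¹ * Real.log (hellingerIntegral α P Q) := rfl

theorem hellingerIntegral_pi {ι : Type*} [Fintype ι] {E : ι → Type*}
    [∀ i, MeasurableSpace (E i)] (α : ℝ) (P Q : ∀ i, Measure (E i))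
    [∀ i, SigmaFinite (P i)] [∀ i, IsProbabilityMeasure (Q i)] (hPQ : ∀ i, P i ≪ Q i) :
    hellingerIntegral α (Measure.pi P) (Measure.pi Q)
      = ∏ i, hellingerIntegral α (P i) (Q i) := by
  have hrn : (Measure.pi P).rnDeriv (Measure.pi Q)
      =ᵐ[Measure.pi Q] fun x => ∏ i, (P i).rnDeriv (Q i) (x i) := by
    rw [Measure.pi_eq_withDensity_prod_rnDeriv P Q hPQ]
    exact Measure.rnDeriv_withDensity _ <| Finset.measurable_prod _ fun i _ =>
      (Measure.measurable_rnDeriv _ _).comp (measurable_pi_apply i)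
  unfold hellingerIntegral
  rw [← integral_fintype_prod_eq_prod]
  refine integral_congr_ae (hrn.mono fun x hx => ?_)
  simp only [hx, ENNReal.toReal_prod]
  rw [Real.finsetProd_rpow _ _ fun i _ => ENNReal.toReal_nonneg]

theorem hellingerIntegral_withDensity_ofReal {Ω : Type*} [MeasurableSpace Ω] (α : ℝ)
    (ν : Measure Ω) [SigmaFinite ν] {f g : Ω → ℝ} (hf : Measurable f) (hg : Measurable g)
    (hf_pos : ∀ x, 0 < f x) (hg_pos : ∀ x, 0 < g x) :
    hellingerIntegral α (ν.withDensity fun x => ENNReal.ofReal (f x))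
        (ν.withDensity fun x => ENNReal.ofReal (g x))
      = ∫ x, f x ^ α * g x ^ (1 - α) ∂ν := by
  have : SigmaFinite (ν.withDensity fun x => ENNReal.ofReal (f x)) :=
    SigmaFinite.withDensity_of_ne_top (ae_of_all _ fun _ => ENNReal.ofReal_ne_top)
  have hrn : (ν.withDensity fun x => ENNReal.ofReal (f x)).rnDeriv
        (ν.withDensity fun x => ENNReal.ofReal (g x))
      =ᵐ[ν] fun x => (ENNReal.ofReal (g x))⁻¹ * ENNReal.ofReal (f x) := by
    filter_upwards [Measure.rnDeriv_withDensity_right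
        (ν.withDensity fun x => ENNReal.ofReal (f x)) ν hg.ennreal_ofReal.aemeasurable
        (ae_of_all _ fun x => (ENNReal.ofReal_pos.2 (hg_pos x)).ne')
        (ae_of_all _ fun _ => ENNReal.ofReal_ne_top),
      Measure.rnDeriv_withDensity ν hf.ennreal_ofReal] with x hx hfx
    rw [hx, hfx]
  unfold hellingerIntegral
  rw [integral_withDensity_eq_integral_toReal_smul hg.ennreal_ofReal
    (ae_of_all _ fun _ => ENNReal.ofReal_lt_top)]
  refine integral_congr_ae (hrn.mono fun x hx => ?_)
  have hfx := hf_pos x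
  have hgx := hg_pos x
  simp only [hx, ENNReal.toReal_mul, ENNReal.toReal_inv, ENNReal.toReal_ofReal hfx.le,
    ENNReal.toReal_ofReal hgx.le, smul_eq_mul]
  rw [Real.mul_rpow (inv_nonneg.2 hgx.le) hfx.le, Real.inv_rpow hgx.le, Real.rpow_sub hgx,
    Real.rpow_one]
  field_simp

theorem gaussianPDFReal_rpow_mul_rpow {v : ℝ≥0} (hv : v ≠ 0) (α m m' x : ℝ) :
    gaussianPDFReal m v x ^ α * gaussianPDFReal m' v x ^ (1 - α)
      = Real.exp (α * (α - 1) * (m - m') ^ 2 / (2 * v))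
        * gaussianPDFReal (α * m + (1 - α) * m') v x := by
  have hc : 0 ≤ (√(2 * Real.pi * v))⁻¹ := by positivity
  have hv' : (0 : ℝ) < v := by positivity
  simp only [gaussianPDFReal, Real.mul_rpow hc (Real.exp_nonneg _), ← Real.exp_mul]
  calc _ = ((√(2 * Real.pi * v))⁻¹ ^ α * (√(2 * Real.pi * v))⁻¹ ^ (1 - α))
        * Real.exp (-(x - m) ^ 2 / (2 * v) * α + -(x - m') ^ 2 / (2 * v) * (1 - α)) := by
        rw [Real.exp_add]; ring
    _ = _ := by
      rw [← Real.rpow_add' hc (by norm_num), add_sub_cancel, Real.rpow_one, mul_left_comm,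
        ← Real.exp_add]
      congr 2
      field_simp
      ring

theorem hellingerIntegral_gaussianReal {v : ℝ≥0} (hv : v ≠ 0) (α m m' : ℝ) :
    hellingerIntegral α (gaussianReal m v) (gaussianReal m' v)
      = Real.exp (α * (α - 1) * (m - m') ^ 2 / (2 * v)) := by
  rw [gaussianReal_of_var_ne_zero _ hv, gaussianReal_of_var_ne_zero _ hv, gaussianPDF_def,
    gaussianPDF_def, hellingerIntegral_withDensity_ofReal α volume
      (measurable_gaussianPDFReal m v) (measurable_gaussianPDFReal m' v)
      (fun x => gaussianPDFReal_pos _ _ x hv) (fun x => gaussianPDFReal_pos _ _ x hv)]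
  simp_rw [gaussianPDFReal_rpow_mul_rpow hv]
  rw [integral_const_mul, integral_gaussianPDFReal_eq_one _ hv, mul_one]

section GaussianArray

variable {ι₁ ι₂ ι₃ : Type*} [Fintype ι₁] [Fintype ι₂] [Fintype ι₃]

theorem map_const_add_pi_pi_pi_gaussianReal (m : ι₁ → ι₂ → ι₃ → ℝ) (v : ℝ≥0) :
    (Measure.pi fun _ : ι₁ => Measure.pi fun _ : ι₂ => Measure.pi fun _ : ι₃ =>
        gaussianReal 0 v).map (fun Z k i j => m k i j + Z k i j)
      = Measure.pi fun k => Measure.pi fun i => Measure.pi fun j => gaussianReal (m k i j) v :=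
  (measurePreserving_pi _ _ fun k => measurePreserving_pi _ _ fun i =>
    measurePreserving_pi _ _ fun j =>
      ⟨measurable_const_add _,
        by simpa using gaussianReal_map_const_add (μ := 0) (v := v) _⟩).map_eq

theorem renyiDiv_pi_pi_pi_gaussianReal (m m' : ι₁ → ι₂ → ι₃ → ℝ) {v : ℝ≥0} (hv : v ≠ 0)
    {α : ℝ} (hα : α ≠ 1) :
    renyiDiv α
        (Measure.pi fun k => Measure.pi fun i => Measure.pi fun j => gaussianReal (m k i j) v)
        (Measure.pi fun k => Measure.pi fun i => Measure.pi fun j => gaussianReal (m' k i j) v)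
      = α / (2 * v) * ∑ k, ∑ i, ∑ j, (m k i j - m' k i j) ^ 2 := by
  have hac (a b : ℝ) : gaussianReal a v ≪ gaussianReal b v :=
    (gaussianReal_absolutelyContinuous a hv).trans (gaussianReal_absolutelyContinuous' b hv)
  have hH : hellingerIntegral α
        (Measure.pi fun k => Measure.pi fun i => Measure.pi fun j => gaussianReal (m k i j) v)
        (Measure.pi fun k => Measure.pi fun i => Measure.pi fun j => gaussianReal (m' k i j) v)
      = ∏ k, ∏ i, ∏ j, Real.exp (α * (α - 1) * (m k i j - m' k i j) ^ 2 / (2 * v)) := by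
    rw [hellingerIntegral_pi _ _ _ fun k => .pi _ _ fun i => .pi _ _ fun j => hac _ _]
    refine Finset.prod_congr rfl fun k _ => ?_
    rw [hellingerIntegral_pi _ _ _ fun i => .pi _ _ fun j => hac _ _]
    refine Finset.prod_congr rfl fun i _ => ?_
    rw [hellingerIntegral_pi _ _ _ fun j => hac _ _]
    exact Finset.prod_congr rfl fun j _ => hellingerIntegral_gaussianReal hv α _ _
  have hα' : α - 1 ≠ 0 := sub_ne_zero.2 hα
  rw [renyiDiv_eq_inv_mul_log_hellingerIntegral, hH]
  simp only [← Real.exp_sum, Real.log_exp, Finset.mul_sum]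
  refine Finset.sum_congr rfl fun k _ => Finset.sum_congr rfl fun i _ =>
    Finset.sum_congr rfl fun j _ => ?_
  field_simp

end GaussianArray

theorem sum_sq_sum_mul_sub_sum_mul_of_eq_off {ι κ δ : Type*} [Fintype ι] [Fintype κ]
    [Fintype δ] (A A' : ι → κ → ℝ) (x : ι → δ → ℝ) {v : ι} {u : κ}
    (h : ∀ l i, (l, i) ≠ (v, u) → A l i = A' l i) :
    ∑ i, ∑ j, ((∑ l, A l i * x l j) - ∑ l, A' l i * x l j) ^ 2
      = (A v u - A' v u) ^ 2 * ∑ j, x v j ^ 2 := by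
  classical
  have hdiff (i : κ) (j : δ) : (∑ l, A l i * x l j) - ∑ l, A' l i * x l j
      = if i = u then (A v u - A' v u) * x v j else 0 := by
    rw [← Finset.sum_sub_distrib]
    split_ifs with hi
    · subst hi
      rw [Finset.sum_eq_single v (fun l _ hl => by rw [h l i (by simp [hl])]; ring)
        (by simp)]
      ring
    · exact Finset.sum_eq_zero fun l _ => by rw [h l i (by simp [hi])]; ring
  simp [hdiff, mul_pow, Finset.mul_sum]

theorem renyiDiv_private_multihop_aggregation_edge_level_general
    (N d K : ℕ) (σ : ℝ) (hσ : 0 < σ)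
    (X : Fin K → Fin N → Fin d → ℝ)
    (hX : ∀ k i, Real.sqrt (∑ j, (X k i j) ^ 2) = 1)
    (A A' : Fin N → Fin N → ℝ)
    (v u : Fin N)
    (h1 : A v u = 1) (h0 : A' v u = 0)
    (hrest : ∀ i j, (i, j) ≠ (v, u) → A i j = A' i j)
    (α : ℝ) (hα : 1 < α) :
    renyiDiv α
        (Measure.map
          (fun Z : Fin K → Fin N → Fin d → ℝ =>
            fun k i j => (∑ l, A l i * X k l j) + Z k i j)
          (Measure.pi fun _ : Fin K => Measure.pi fun _ : Fin N =>
            Measure.pi fun _ : Fin d => gaussianReal 0 ((σ ^ 2).toNNReal)))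
        (Measure.map
          (fun Z : Fin K → Fin N → Fin d → ℝ =>
            fun k i j => (∑ l, A' l i * X k l j) + Z k i j)
          (Measure.pi fun _ : Fin K => Measure.pi fun _ : Fin N =>
            Measure.pi fun _ : Fin d => gaussianReal 0 ((σ ^ 2).toNNReal))) ≤
      K * α / (2 * σ ^ 2) := by
  have hvar : (σ ^ 2).toNNReal ≠ 0 := by simpa using hσ.ne'
  have hrow (k : Fin K) : ∑ j, X k v j ^ 2 = 1 := by simpa using hX k v
  rw [map_const_add_pi_pi_pi_gaussianReal, map_const_add_pi_pi_pi_gaussianReal,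
    renyiDiv_pi_pi_pi_gaussianReal _ _ hvar hα.ne']
  refine le_of_eq ?_
  simp only [sum_sq_sum_mul_sub_sum_mul_of_eq_off _ _ _ hrest, h1, h0, hrow, sub_zero, one_pow,
    mul_one, Real.coe_toNNReal _ (sq_nonneg σ), Finset.sum_const, Finset.card_univ,
    Fintype.card_fin, nsmul_eq_mul]
  ring

/-- **PMA with `K` hops is edge-level `(α, Kα/(2σ²))`-RDP (nonadaptive form).**
`X 0, …, X (K−1)` are `N × d` row-normalized matrices (rows of Euclidean norm `1`), and
`A, A'` are binary adjacency matrices differing in exactly one entry `(v, u)` where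
`A v u = 1` and `A' v u = 0`. `P` is the law of `(Aᵀ·X 0 + Z 0, …, Aᵀ·X (K−1) + Z (K−1))`
and `P'` the corresponding law for `A'`, where the `Z k` are independent `N × d` matrices of
independent `N(0, σ²)` entries and the entry `(i, j)` of `Aᵀ·X k` is `∑ l, A l i * X k l j`.
Then for every `α > 1`, `D_α(P ‖ P') ≤ K·α/(2σ²)`. -/
theorem renyiDiv_private_multihop_aggregation_edge_level
    (N d K : ℕ) (hN : 0 < N) (hd : 0 < d) (hK : 0 < K) (σ : ℝ) (hσ : 0 < σ)
    (X : Fin K → Fin N → Fin d → ℝ)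
    (hX : ∀ k i, Real.sqrt (∑ j, (X k i j) ^ 2) = 1)
    (A A' : Fin N → Fin N → ℝ)
    (hA : ∀ i j, A i j = 0 ∨ A i j = 1)
    (hA' : ∀ i j, A' i j = 0 ∨ A' i j = 1)
    (v u : Fin N)
    (h1 : A v u = 1) (h0 : A' v u = 0)
    (hrest : ∀ i j, (i, j) ≠ (v, u) → A i j = A' i j)
    (α : ℝ) (hα : 1 < α) :
    renyiDiv α
        (Measure.map
          (fun Z : Fin K → Fin N → Fin d → ℝ =>
            fun k i j => (∑ l, A l i * X k l j) + Z k i j)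
          (Measure.pi fun _ : Fin K => Measure.pi fun _ : Fin N =>
            Measure.pi fun _ : Fin d => gaussianReal 0 ((σ ^ 2).toNNReal)))
        (Measure.map
          (fun Z : Fin K → Fin N → Fin d → ℝ =>
            fun k i j => (∑ l, A' l i * X k l j) + Z k i j)
          (Measure.pi fun _ : Fin K => Measure.pi fun _ : Fin N =>
            Measure.pi fun _ : Fin d => gaussianReal 0 ((σ ^ 2).toNNReal))) ≤
      K * α / (2 * σ ^ 2) :=
  renyiDiv_private_multihop_aggregation_edge_level_general N d K σ hσ X hX A A' v u h1 h0 hrest α hα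
end
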